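/- arXiv:math/0407154 — 4 statements merged into one kernel-verified Lean document; each statement's English description precedes it below -/
import Mathlib

section
/- Let (X, Y, λ) ∈ SL_m(R) × SL_n(R) × R^× with m ≠ n. Then the automorphism (Ad(X,Y)) ∘ j(λ) of sl(m|n)(R) is the identity if and only if there exist units α, β ∈ R with α^m = β^n = 1, X = αI_m, Y = βI_n, and λ = α⁻¹β. Consequently the kernel of Ad × j : SL_m × SL_n × G_m → Aut sl(m|n) is isomorphic to μ_m × μ_n. -/
open Matrix

section

variable {R : Type*} {m n : ℕ}

/-- `j(λ) : (A B; C D) ↦ (A λB; λ⁻¹C D)` for a unit `λ` of `R`. -/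
def jMap [CommRing R] (u : Rˣ) (M : Matrix (Fin m ⊕ Fin n) (Fin m ⊕ Fin n) R) :
    Matrix (Fin m ⊕ Fin n) (Fin m ⊕ Fin n) R :=
  fun i j =>
    if i.isLeft = j.isLeft then M i j
    else (if i.isLeft then (u : R) else ((u⁻¹ : Rˣ) : R)) * M i j

/-- `Ad(X,Y)`: conjugation by `diag(X,Y)` on `gl(m|n)(R)`. -/
noncomputable def AdXY [CommRing R] (X : Matrix (Fin m) (Fin m) R)
    (Y : Matrix (Fin n) (Fin n) R) (M : Matrix (Fin m ⊕ Fin n) (Fin m ⊕ Fin n) R) :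
    Matrix (Fin m ⊕ Fin n) (Fin m ⊕ Fin n) R :=
  fromBlocks X 0 0 Y * M * fromBlocks X⁻¹ 0 0 Y⁻¹

end

/-- For `m ≠ n`, the automorphism `Ad(X,Y) ∘ j(λ)` of `sl(m|n)(R)` is the identity
iff `X = αI`, `Y = βI` with `α^m = β^n = 1` and `λ = α⁻¹β`; i.e. the kernel of
`Ad × j : SL_m × SL_n × G_m → Aut sl(m|n)` is `μ_m × μ_n`. -/
theorem stmt_4 (R : Type*) [CommRing R] (m n : ℕ) (hm : 1 ≤ m) (hn : 1 ≤ n)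
    (hmn : m ≠ n) (X : Matrix (Fin m) (Fin m) R) (Y : Matrix (Fin n) (Fin n) R)
    (hX : X.det = 1) (hY : Y.det = 1) (u : Rˣ) :
    (∀ M : Matrix (Fin m ⊕ Fin n) (Fin m ⊕ Fin n) R,
        Matrix.trace M.toBlocks₁₁ = Matrix.trace M.toBlocks₂₂ →
        AdXY X Y (jMap u M) = M) ↔
      ∃ α β : Rˣ, (α : R) ^ m = 1 ∧ (β : R) ^ n = 1 ∧
        X = (α : R) • (1 : Matrix (Fin m) (Fin m) R) ∧
        Y = (β : R) • (1 : Matrix (Fin n) (Fin n) R) ∧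
        u = α⁻¹ * β := by
  constructor
  · intro h
    have hXinv : X⁻¹ * X = 1 := Matrix.nonsing_inv_mul X (by simp [hX])
    have hYinv : Y⁻¹ * Y = 1 := Matrix.nonsing_inv_mul Y (by simp [hY])
    have key : ∀ (p i : Fin m) (q j : Fin n),
        (if q = j then X i p * (u : R) else 0) =
          (if p = i then Y q j else 0) := by
      intro p i q j
      set M : Matrix (Fin m ⊕ Fin n) (Fin m ⊕ Fin n) R :=
        Matrix.single (Sum.inl p) (Sum.inr q) 1 with hM
      have htr : Matrix.trace M.toBlocks₁₁ = Matrix.trace M.toBlocks₂₂ := by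
        simp [Matrix.trace, Matrix.toBlocks₁₁, Matrix.toBlocks₂₂, hM,
          Matrix.single, Matrix.diag]
      have hN : jMap u M = (u : R) • M := by
        funext a b
        rcases a with a | a <;> rcases b with b | b <;>
          simp [jMap, hM, Matrix.single, Matrix.smul_apply]
      have h1 := h M htr
      rw [AdXY, hN] at h1
      have h2 : fromBlocks X 0 0 Y * ((u : R) • M) = M * fromBlocks X 0 0 Y := by
        have hone : fromBlocks X⁻¹ 0 0 Y⁻¹ * fromBlocks X 0 0 Y =
            (1 : Matrix (Fin m ⊕ Fin n) (Fin m ⊕ Fin n) R) := by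
          rw [Matrix.fromBlocks_multiply]
          simp [hXinv, hYinv]
        calc fromBlocks X 0 0 Y * ((u : R) • M)
            = fromBlocks X 0 0 Y * ((u : R) • M) *
              (fromBlocks X⁻¹ 0 0 Y⁻¹ * fromBlocks X 0 0 Y) := by rw [hone, mul_one]
          _ = M * fromBlocks X 0 0 Y := by rw [← Matrix.mul_assoc, h1]
      have h3 := congrFun (congrFun h2 (Sum.inl i)) (Sum.inr j)
      simpa [Matrix.mul_apply, Fintype.sum_sum_type, hM, Matrix.single,
        Matrix.smul_apply, Finset.mul_sum, ite_and, Finset.sum_ite_eq] using h3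
    have p0 : Fin m := ⟨0, hm⟩
    have q0 : Fin n := ⟨0, hn⟩
    set c : R := X p0 p0 with hc
    have hXc : X = c • (1 : Matrix (Fin m) (Fin m) R) := by
      funext i j
      rcases eq_or_ne i j with rfl | hij
      · have h1 : X i i * (u : R) = Y q0 q0 := by simpa using key i i q0 q0
        have h2 : c * (u : R) = Y q0 q0 := by simpa [← hc] using key p0 p0 q0 q0
        have hii : X i i = c := u.mul_left_inj.mp (by rw [h1, h2])
        simp [hii, Matrix.smul_apply, Matrix.one_apply]
      · have h1 : X i j * (u : R) = 0 := by simpa [Ne.symm hij] using key j i q0 q0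
        have h0 : X i j = 0 := u.mul_left_eq_zero.mp h1
        simp [h0, Matrix.smul_apply, Matrix.one_apply, hij]
    have hYd : Y = ((u : R) * c) • (1 : Matrix (Fin n) (Fin n) R) := by
      funext q j
      have h1 : (if q = j then c * (u : R) else 0) = Y q j := by
        simpa [← hc] using key p0 p0 q j
      rw [← h1]
      rcases eq_or_ne q j with rfl | hqj
      · simp [Matrix.smul_apply, Matrix.one_apply, mul_comm]
      · simp [Matrix.smul_apply, Matrix.one_apply, hqj]
    have hcm : c ^ m = 1 := by
      rw [hXc] at hX
      simpa [Matrix.det_smul] using hX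
    have hdn : ((u : R) * c) ^ n = 1 := by
      rw [hYd] at hY
      simpa [Matrix.det_smul] using hY
    refine ⟨⟨c, c ^ (m - 1), ?_, ?_⟩, ?_, ?_, ?_, ?_, ?_, ?_⟩
    · rw [← pow_succ', Nat.sub_add_cancel hm, hcm]
    · rw [← pow_succ, Nat.sub_add_cancel hm, hcm]
    · exact u * ⟨c, c ^ (m - 1), by rw [← pow_succ', Nat.sub_add_cancel hm, hcm],
        by rw [← pow_succ, Nat.sub_add_cancel hm, hcm]⟩
    · exact hcm
    · exact hdn
    · exact hXc
    · exact hYd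
    · rw [mul_comm u, inv_mul_cancel_left]
  · rintro ⟨α, β, hα, hβ, rfl, rfl, rfl⟩
    intro M _
    have ha : (α : R) * ((α⁻¹ : Rˣ) : R) = 1 := α.mul_inv
    have hb : (β : R) * ((β⁻¹ : Rˣ) : R) = 1 := β.mul_inv
    have hXi : (((α : R)) • (1 : Matrix (Fin m) (Fin m) R))⁻¹ =
        ((α⁻¹ : Rˣ) : R) • (1 : Matrix (Fin m) (Fin m) R) := by
      apply Matrix.inv_eq_right_inv
      rw [Matrix.smul_mul, Matrix.mul_smul, one_mul, smul_smul, ha, one_smul]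
    have hYi : (((β : R)) • (1 : Matrix (Fin n) (Fin n) R))⁻¹ =
        ((β⁻¹ : Rˣ) : R) • (1 : Matrix (Fin n) (Fin n) R) := by
      apply Matrix.inv_eq_right_inv
      rw [Matrix.smul_mul, Matrix.mul_smul, one_mul, smul_smul, hb, one_smul]
    rw [AdXY, hXi, hYi, Matrix.smul_one_eq_diagonal, Matrix.smul_one_eq_diagonal,
      Matrix.smul_one_eq_diagonal, Matrix.smul_one_eq_diagonal,
      Matrix.fromBlocks_diagonal, Matrix.fromBlocks_diagonal]
    funext i j
    rw [Matrix.mul_diagonal, Matrix.diagonal_mul]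
    rcases i with i | i <;> rcases j with j | j <;>
      simp only [jMap, Sum.elim_inl, Sum.elim_inr, Sum.isLeft_inl, Sum.isLeft_inr,
        if_true, if_false, if_neg Bool.true_eq_false_eq_False,
        if_neg Bool.false_eq_true_eq_False, _root_.mul_inv_rev, inv_inv, Units.val_mul, reduceIte]
    · linear_combination (M (Sum.inl i) (Sum.inl j)) * ha
    · linear_combination (M (Sum.inl i) (Sum.inr j)) * ((β : R) * ((β⁻¹ : Rˣ) : R)) * ha +
        (M (Sum.inl i) (Sum.inr j)) * hb
    · linear_combination (M (Sum.inr i) (Sum.inl j)) * ((α : R) * ((α⁻¹ : Rˣ) : R)) * hb +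
        (M (Sum.inr i) (Sum.inl j)) * ha
    · linear_combination (M (Sum.inr i) (Sum.inr j)) * hb
end

section
/- Let g be a Lie superalgebra over k and σ a finite-order automorphism. For any two periods m and m' of σ (i.e., σ^m = σ^{m'} = id), the loop superalgebras L_m(g,σ) and L_{m'}(g,σ) are isomorphic as k-Lie superalgebras, where L_m(g,σ) = ⊕_{i∈ℤ} g_{ī mod m} ⊗ z^i ⊆ g ⊗ k[z,z⁻¹] and g_ī = {x ∈ g : σ(x) = ζ_m^i x} with respect to a fixed compatible system of primitive roots of unity ζ_m (so that ζ_{lm}^l = ζ_m). -/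
section

variable {k V : Type*} [Field k] [AddCommGroup V] [Module k V]

/-- The bracket of the loop superalgebra `g ⊗ k[z,z⁻¹]`, modelled on finitely
supported functions `ℤ →₀ g`: `[x⊗z^i, y⊗z^j] = [x,y]⊗z^{i+j}` (convolution). -/
noncomputable def loopBracket (mul : V →ₗ[k] V →ₗ[k] V) (f g : ℤ →₀ V) : ℤ →₀ V :=
  f.sum fun i x => g.sum fun j y => Finsupp.single (i + j) (mul x y)

/-- The loop algebra `L_m(g,σ) = ⊕_i g_ī ⊗ z^i`: the set of `f : ℤ →₀ g` with
`f i` in the `ζ^i`-eigenspace of `σ`. -/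
noncomputable def loopSub (σ : V ≃ₗ[k] V) (ζ : k) : Submodule k (ℤ →₀ V) where
  carrier := {f | ∀ i : ℤ, σ (f i) = ζ ^ i • f i}
  add_mem' := by
    intro f g hf hg i
    simp only [Finsupp.add_apply, map_add, hf i, hg i, smul_add]
  zero_mem' := by
    intro i
    simp
  smul_mem' := by
    intro c f hf i
    rw [Finsupp.smul_apply, map_smul, hf i, smul_comm]

end

/-!
Rescaling exponents, `x ⊗ z^i ↦ x ⊗ z^{l i}`, maps `L_m(g,σ)` isomorphically onto `L_{lm}(g,σ)`:
it lands there because `ζ_{lm}^l = ζ_m`, and it is onto because `σ^m = id` forces every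
`ζ_{lm}^j`-eigenvector of `σ` with `l ∤ j` to vanish. Both `L_m` and `L_{m'}` are therefore
isomorphic to `L_{mm'}`, compatibly with the bracket and the `ℤ/2`-grading.
-/

theorem Finsupp.forall_mapDomain_apply_mem_iff {α β M S : Type*} [AddCommMonoid M]
    [SetLike S M] [ZeroMemClass S M] {φ : α → β} (hφ : Function.Injective φ) (p : S)
    (f : α →₀ M) : (∀ j, f.mapDomain φ j ∈ p) ↔ ∀ i, f i ∈ p := by
  refine ⟨fun h i => Finsupp.mapDomain_apply hφ f i ▸ h (φ i), fun h j => ?_⟩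
  by_cases hj : j ∈ Set.range φ
  · obtain ⟨i, rfl⟩ := hj
    rw [Finsupp.mapDomain_apply hφ]
    exact h i
  · rw [Finsupp.mapDomain_of_notMem_range _ _ hj]
    exact zero_mem p

section

variable {k V : Type*} [Field k] [AddCommGroup V] [Module k V]

theorem mapDomain_loopBracket (mul : V →ₗ[k] V →ₗ[k] V) (φ : ℤ →+ ℤ) (f g : ℤ →₀ V) :
    (loopBracket mul f g).mapDomain φ = loopBracket mul (f.mapDomain φ) (g.mapDomain φ) := by
  simp only [loopBracket, Finsupp.mapDomain_sum, Finsupp.mapDomain_single, map_add]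
  rw [Finsupp.sum_mapDomain_index (by simp) (by simp [Finsupp.sum_add])]
  refine Finsupp.sum_congr fun i _ => ?_
  rw [Finsupp.sum_mapDomain_index (by simp) (by simp)]

variable {σ : V ≃ₗ[k] V} {ζ : k}

theorem loopBracket_mem_loopSub {mul : V →ₗ[k] V →ₗ[k] V}
    (hσ : ∀ x y, σ (mul x y) = mul (σ x) (σ y)) (hζ : ζ ≠ 0) {f g : ℤ →₀ V}
    (hf : f ∈ loopSub σ ζ) (hg : g ∈ loopSub σ ζ) :
    loopBracket mul f g ∈ loopSub σ ζ := by
  intro n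
  simp only [loopBracket, Finsupp.sum_apply, map_finsuppSum, Finsupp.smul_sum]
  refine Finsupp.sum_congr fun i _ => Finsupp.sum_congr fun j _ => ?_
  rcases eq_or_ne (i + j) n with rfl | h
  · simp only [Finsupp.single_eq_same, hσ, hf i, hg j, map_smul, LinearMap.smul_apply,
      smul_smul, zpow_add₀ hζ, mul_comm]
  · simp only [Finsupp.single_eq_of_ne h.symm, map_zero, smul_zero]

theorem iterate_apply_of_mem_loopSub {f : ℤ →₀ V} (hf : f ∈ loopSub σ ζ) (j : ℤ) (n : ℕ) :
    (⇑σ)^[n] (f j) = (ζ ^ j) ^ n • f j := by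
  induction n with
  | zero => simp
  | succ n ih => rw [Function.iterate_succ_apply', ih, map_smul, hf j, smul_smul, pow_succ]

theorem dvd_of_mem_loopSub {l m : ℕ} (hm : 0 < m) (hζ : IsPrimitiveRoot ζ (l * m))
    (hσm : ∀ x, (⇑σ)^[m] x = x) {f : ℤ →₀ V} (hf : f ∈ loopSub σ ζ) {j : ℤ} (hj : f j ≠ 0) :
    (l : ℤ) ∣ j := by
  have hsmul : (ζ ^ (j * m) - 1) • f j = 0 := by
    rw [sub_smul, one_smul, zpow_mul, zpow_natCast, ← iterate_apply_of_mem_loopSub hf, hσm,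
      sub_self]
  have hpow : ζ ^ (j * m) = 1 := sub_eq_zero.mp ((smul_eq_zero.mp hsmul).resolve_right hj)
  have hdvd := (hζ.zpow_eq_one_iff_dvd _).mp hpow
  push_cast at hdvd
  exact (mul_dvd_mul_iff_right (by positivity)).mp hdvd

variable {ζ' : k} {l : ℕ}

theorem mapDomain_mul_mem_loopSub (hl : 0 < l) (hpow : ζ' ^ l = ζ) {f : ℤ →₀ V}
    (hf : f ∈ loopSub σ ζ) : f.mapDomain ((l : ℤ) * ·) ∈ loopSub σ ζ' := by
  intro j
  by_cases hj : j ∈ Set.range ((l : ℤ) * ·)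
  · obtain ⟨i, rfl⟩ := hj
    rw [Finsupp.mapDomain_apply (mul_right_injective₀ (by positivity)), hf i, zpow_mul,
      zpow_natCast, hpow]
  · rw [Finsupp.mapDomain_of_notMem_range _ _ hj, map_zero, smul_zero]

theorem exists_mapDomain_mul_eq_of_mem_loopSub {m : ℕ} (hl : 0 < l) (hm : 0 < m)
    (hζ' : IsPrimitiveRoot ζ' (l * m)) (hpow : ζ' ^ l = ζ) (hσm : ∀ x, (⇑σ)^[m] x = x)
    {g : ℤ →₀ V} (hg : g ∈ loopSub σ ζ') :
    ∃ f ∈ loopSub σ ζ, f.mapDomain ((l : ℤ) * ·) = g := by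
  have hinj : Function.Injective ((l : ℤ) * ·) := mul_right_injective₀ (by positivity)
  have hsupp : (g.support : Set ℤ) ⊆ Set.range ((l : ℤ) * ·) := fun j hj =>
    (dvd_of_mem_loopSub hm hζ' hσm hg (Finsupp.mem_support_iff.mp hj)).imp fun _ h => h.symm
  refine ⟨g.comapDomain _ hinj.injOn, fun i => ?_, Finsupp.mapDomain_comapDomain _ hinj g hsupp⟩
  rw [Finsupp.comapDomain_apply, hg, zpow_mul, zpow_natCast, hpow]

theorem exists_loopSub_equiv_mapDomain_mul {m : ℕ} (hl : 0 < l) (hm : 0 < m)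
    (hζ' : IsPrimitiveRoot ζ' (l * m)) (hpow : ζ' ^ l = ζ) (hσm : ∀ x, (⇑σ)^[m] x = x) :
    ∃ E : loopSub σ ζ ≃ₗ[k] loopSub σ ζ',
      ∀ f, (E f : ℤ →₀ V) = (f : ℤ →₀ V).mapDomain ((l : ℤ) * ·) := by
  have hinj : Function.Injective ((l : ℤ) * ·) := mul_right_injective₀ (by positivity)
  let E := (Finsupp.lmapDomain V k ((l : ℤ) * ·)).restrict
    fun _ hf => mapDomain_mul_mem_loopSub (σ := σ) hl hpow hf
  have hE : Function.Bijective E := by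
    refine ⟨fun f f' h => Subtype.ext (Finsupp.mapDomain_injective hinj congr($h.1)), fun g => ?_⟩
    obtain ⟨f, hf, hfg⟩ := exists_mapDomain_mul_eq_of_mem_loopSub hl hm hζ' hpow hσm g.2
    exact ⟨⟨f, hf⟩, Subtype.ext hfg⟩
  exact ⟨.ofBijective E hE, fun _ => rfl⟩

end

theorem stmt_10_general (k V : Type*) [Field k] [AddCommGroup V] [Module k V]
    (g0 g1 : Submodule k V) (mul : V →ₗ[k] V →ₗ[k] V)
    (σ : V ≃ₗ[k] V) (hσbr : ∀ x y, σ (mul x y) = mul (σ x) (σ y))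
    (ζ : ℕ → k) (hζ : ∀ l : ℕ, 0 < l → IsPrimitiveRoot (ζ l) l)
    (hcompat : ∀ l l' : ℕ, 0 < l → 0 < l' → (ζ (l * l')) ^ l = ζ l')
    (m m' : ℕ) (hm : 0 < m) (hm' : 0 < m')
    (hσm : ∀ x, (⇑σ)^[m] x = x) (hσm' : ∀ x, (⇑σ)^[m'] x = x) :
    (∀ x y : ↥(loopSub σ (ζ m)),
      loopBracket mul (x : ℤ →₀ V) (y : ℤ →₀ V) ∈ loopSub σ (ζ m)) ∧
    (∀ x y : ↥(loopSub σ (ζ m')),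
      loopBracket mul (x : ℤ →₀ V) (y : ℤ →₀ V) ∈ loopSub σ (ζ m')) ∧
    ∃ e : ↥(loopSub σ (ζ m)) ≃ₗ[k] ↥(loopSub σ (ζ m')),
      (∀ x y z : ↥(loopSub σ (ζ m)),
        (z : ℤ →₀ V) = loopBracket mul (x : ℤ →₀ V) (y : ℤ →₀ V) →
        (e z : ℤ →₀ V) = loopBracket mul (e x : ℤ →₀ V) (e y : ℤ →₀ V)) ∧
      (∀ x : ↥(loopSub σ (ζ m)),
        (∀ i, (x : ℤ →₀ V) i ∈ g0) ↔ (∀ i, (e x : ℤ →₀ V) i ∈ g0)) ∧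
      (∀ x : ↥(loopSub σ (ζ m)),
        (∀ i, (x : ℤ →₀ V) i ∈ g1) ↔ (∀ i, (e x : ℤ →₀ V) i ∈ g1)) := by
  have hbracket {n : ℕ} (hn : 0 < n) (x y : loopSub σ (ζ n)) :
      loopBracket mul (x : ℤ →₀ V) y ∈ loopSub σ (ζ n) :=
    loopBracket_mem_loopSub hσbr ((hζ n hn).ne_zero hn.ne') x.2 y.2
  have hinj {n : ℕ} (hn : 0 < n) : Function.Injective ((n : ℤ) * ·) :=
    mul_right_injective₀ (by positivity)
  have hdilate (n : ℕ) (f g : ℤ →₀ V) : (loopBracket mul f g).mapDomain ((n : ℤ) * ·) =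
      loopBracket mul (f.mapDomain ((n : ℤ) * ·)) (g.mapDomain ((n : ℤ) * ·)) :=
    mapDomain_loopBracket mul (.mulLeft (n : ℤ)) f g
  obtain ⟨E, hE⟩ := exists_loopSub_equiv_mapDomain_mul (ζ' := ζ (m * m')) hm' hm
    (mul_comm m' m ▸ hζ _ (by positivity)) (mul_comm m' m ▸ hcompat m' m hm' hm) hσm
  obtain ⟨E', hE'⟩ := exists_loopSub_equiv_mapDomain_mul hm hm'
    (hζ _ (by positivity)) (hcompat m m' hm hm') hσm'
  let e := E.trans E'.symm
  have he (x : loopSub σ (ζ m)) : ((e x : loopSub σ (ζ m')) : ℤ →₀ V).mapDomain ((m : ℤ) * ·) =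
      (x : ℤ →₀ V).mapDomain ((m' : ℤ) * ·) := by
    rw [← hE', ← hE, LinearEquiv.trans_apply, LinearEquiv.apply_symm_apply]
  refine ⟨hbracket hm, hbracket hm', e, fun x y z hz => ?_, fun x => ?_, fun x => ?_⟩
  · apply Finsupp.mapDomain_injective (hinj hm)
    rw [he, hz, hdilate, ← he, ← he, hdilate]
  all_goals rw [← Finsupp.forall_mapDomain_apply_mem_iff (hinj hm') _ (x : ℤ →₀ V), ← he,
    Finsupp.forall_mapDomain_apply_mem_iff (hinj hm)]

/-- Independence of the loop superalgebra from the choice of the period: if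
`σ^m = σ^{m'} = id`, then `L_m(g,σ) ≅ L_{m'}(g,σ)` as `k`-Lie superalgebras
(with respect to a fixed compatible system of primitive roots of unity). -/
theorem stmt_10 (k V : Type*) [Field k] [IsAlgClosed k] [CharZero k]
    [AddCommGroup V] [Module k V] [FiniteDimensional k V]
    (g0 g1 : Submodule k V) (hcompl : IsCompl g0 g1)
    (mul : V →ₗ[k] V →ₗ[k] V)
    (σ : V ≃ₗ[k] V) (hσbr : ∀ x y, σ (mul x y) = mul (σ x) (σ y))
    (hσ0 : ∀ x ∈ g0, σ x ∈ g0) (hσ1 : ∀ x ∈ g1, σ x ∈ g1)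
    (ζ : ℕ → k) (hζ : ∀ l : ℕ, 0 < l → IsPrimitiveRoot (ζ l) l)
    (hcompat : ∀ l l' : ℕ, 0 < l → 0 < l' → (ζ (l * l')) ^ l = ζ l')
    (m m' : ℕ) (hm : 0 < m) (hm' : 0 < m')
    (hσm : ∀ x, (⇑σ)^[m] x = x) (hσm' : ∀ x, (⇑σ)^[m'] x = x) :
    (∀ x y : ↥(loopSub σ (ζ m)),
      loopBracket mul (x : ℤ →₀ V) (y : ℤ →₀ V) ∈ loopSub σ (ζ m)) ∧
    (∀ x y : ↥(loopSub σ (ζ m')),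
      loopBracket mul (x : ℤ →₀ V) (y : ℤ →₀ V) ∈ loopSub σ (ζ m')) ∧
    ∃ e : ↥(loopSub σ (ζ m)) ≃ₗ[k] ↥(loopSub σ (ζ m')),
      (∀ x y z : ↥(loopSub σ (ζ m)),
        (z : ℤ →₀ V) = loopBracket mul (x : ℤ →₀ V) (y : ℤ →₀ V) →
        (e z : ℤ →₀ V) = loopBracket mul (e x : ℤ →₀ V) (e y : ℤ →₀ V)) ∧
      (∀ x : ↥(loopSub σ (ζ m)),
        (∀ i, (x : ℤ →₀ V) i ∈ g0) ↔ (∀ i, (e x : ℤ →₀ V) i ∈ g0)) ∧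
      (∀ x : ↥(loopSub σ (ζ m)),
        (∀ i, (x : ℤ →₀ V) i ∈ g1) ↔ (∀ i, (e x : ℤ →₀ V) i ∈ g1)) :=
  stmt_10_general k V g0 g1 mul σ hσbr ζ hζ hcompat m m' hm hm' hσm hσm'
end

section
/- Every k-algebra automorphism φ of the Grassmann algebra Λ(n) that preserves the ℤ/2-grading and commutes with all derivations ∂/∂ξ_i and with the degree-zero action of gl_n is the identity. More precisely: if φ ∈ Aut Λ(n)(R) (R a commutative k-algebra) satisfies φ D = D φ for all D ∈ W(n)(R), then φ = id; i.e., the conjugation homomorphism Ad : Aut Λ(n) → Aut W(n) has trivial kernel. -/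
/-
The contraction `∂_d` with a linear form `d` is an odd superderivation of the exterior algebra,
and `ι v * ∂_d (-)` is an even one; it is even an honest derivation, because `ι v * x = α x * ι v`
for the grade involution `α`. Choosing `w` with `d w = 1`, we have `ι v = ι v * ∂_d (ι w)`, so an
automorphism `φ` commuting with both operators satisfies
`φ (ι v) = ι v * ∂_d (φ (ι w)) = ι v * φ (∂_d (ι w)) = ι v * φ 1 = ι v`,
and an algebra map fixing the generators is the identity.
-/

open ExteriorAlgebra

section

variable (R : Type*) [CommRing R] (n : ℕ)

/-- The degree-one part `V = Λ(n)₁` of the Grassmann algebra over `R`. -/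
noncomputable def grassV : Submodule R (ExteriorAlgebra R (Fin n → R)) :=
  LinearMap.range (ι R : (Fin n → R) →ₗ[R] ExteriorAlgebra R (Fin n → R))

/-- The even part of the Grassmann algebra. -/
noncomputable def evenSub : Submodule R (ExteriorAlgebra R (Fin n → R)) :=
  ⨆ j : ℕ, grassV R n ^ (2 * j)

/-- The odd part of the Grassmann algebra. -/
noncomputable def oddSub : Submodule R (ExteriorAlgebra R (Fin n → R)) :=
  ⨆ j : ℕ, grassV R n ^ (2 * j + 1)

/-- A homogeneous superderivation of the Grassmann algebra of parity `p`
(`p = true` means odd): it shifts parity by `p` and satisfies the signed Leibniz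
rule. Elements of `W(n)(R)` are sums of such. -/
def IsSuperDer (p : Bool) (D : Module.End R (ExteriorAlgebra R (Fin n → R))) : Prop :=
  (if p then
      (∀ a ∈ evenSub R n, D a ∈ oddSub R n) ∧ (∀ a ∈ oddSub R n, D a ∈ evenSub R n)
    else
      (∀ a ∈ evenSub R n, D a ∈ evenSub R n) ∧ (∀ a ∈ oddSub R n, D a ∈ oddSub R n)) ∧
  (∀ a ∈ evenSub R n, ∀ b, D (a * b) = D a * b + a * D b) ∧
  (∀ a ∈ oddSub R n, ∀ b, D (a * b) = D a * b + (if p then (-1 : R) else 1) • (a * D b))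

end

namespace CliffordAlgebra

variable {R M : Type*} [CommRing R] [AddCommGroup M] [Module R M] {Q : QuadraticForm R M}

theorem contractLeft_mul (d : Module.Dual R M) (a b : CliffordAlgebra Q) :
    contractLeft d (a * b) = contractLeft d a * b + involute a * contractLeft d b := by
  induction a using CliffordAlgebra.induction generalizing b with
  | algebraMap r =>
    rw [contractLeft_algebraMap_mul, contractLeft_algebraMap, zero_mul, zero_add,
      AlgHom.commutes]
  | ι v =>
    rw [contractLeft_ι_mul, contractLeft_ι, involute_ι, Algebra.smul_def, neg_mul,
      sub_eq_add_neg]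
  | mul x y hx hy =>
    rw [mul_assoc, hx, hy, hx, map_mul]
    simp only [mul_add, add_mul, mul_assoc, add_assoc]
  | add x y hx hy =>
    simp only [add_mul, map_add, hx, hy]
    abel

theorem contractLeft_mem_range_ι_pow (d : Module.Dual R M) {m : ℕ} {x : CliffordAlgebra Q}
    (hx : x ∈ LinearMap.range (ι Q) ^ (m + 1)) :
    contractLeft d x ∈ LinearMap.range (ι Q) ^ m := by
  induction m generalizing x with
  | zero =>
    obtain ⟨v, rfl⟩ := (pow_one (LinearMap.range (ι Q))) ▸ hx
    rw [contractLeft_ι, pow_zero]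
    exact Submodule.algebraMap_mem _
  | succ m ih =>
    rw [pow_succ'] at hx
    induction hx using Submodule.mul_induction_on' with
    | mem_mul_mem a ha y hy =>
      obtain ⟨v, rfl⟩ := ha
      rw [contractLeft_ι_mul]
      refine sub_mem (Submodule.smul_mem _ _ hy) ?_
      rw [pow_succ']
      exact Submodule.mul_mem_mul ⟨v, rfl⟩ (ih hy)
    | add x _ y _ hx hy => rw [map_add]; exact add_mem hx hy

theorem contractLeft_mem_evenOdd (d : Module.Dual R M) {i : ZMod 2} {x : CliffordAlgebra Q}
    (hx : x ∈ evenOdd Q i) : contractLeft d x ∈ evenOdd Q (i + 1) := by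
  induction hx using Submodule.iSup_induction' with
  | mem j x hx =>
    obtain ⟨_ | m, rfl⟩ := j
    · obtain ⟨r, rfl⟩ := Submodule.mem_one.mp hx
      rw [contractLeft_algebraMap]
      exact zero_mem _
    · refine Submodule.mem_iSup_of_mem ⟨m, ?_⟩ (contractLeft_mem_range_ι_pow d hx)
      push_cast
      rw [add_assoc, CharTwo.add_self_eq_zero, add_zero]
  | zero => rw [map_zero]; exact zero_mem _
  | add x y _ _ hx hy => rw [map_add]; exact add_mem hx hy

theorem ι_mul_contractLeft_mem_evenOdd (v : M) (d : Module.Dual R M) {i : ZMod 2}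
    {x : CliffordAlgebra Q} (hx : x ∈ evenOdd Q i) : ι Q v * contractLeft d x ∈ evenOdd Q i := by
  have h := SetLike.mul_mem_graded (ι_mem_evenOdd_one Q v) (contractLeft_mem_evenOdd d hx)
  rwa [add_left_comm, CharTwo.add_self_eq_zero, add_zero] at h

end CliffordAlgebra

namespace ExteriorAlgebra

variable {R M : Type*} [CommRing R] [AddCommGroup M] [Module R M]

open CliffordAlgebra

theorem ι_mul_eq_involute_mul_ι (v : M) (a : ExteriorAlgebra R M) :
    ι R v * a = involute a * ι R v := by
  induction a using CliffordAlgebra.induction with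
  | algebraMap r => rw [AlgHom.commutes, Algebra.commutes]
  | ι w => rw [involute_ι, neg_mul, eq_neg_iff_add_eq_zero, ι_add_mul_swap]
  | mul x y hx hy => rw [← mul_assoc, hx, mul_assoc, hy, map_mul, mul_assoc]
  | add x y hx hy => rw [mul_add, hx, hy, map_add, add_mul]

theorem ι_mul_contractLeft_mul (v : M) (d : Module.Dual R M) (a b : ExteriorAlgebra R M) :
    ι R v * contractLeft d (a * b)
      = ι R v * contractLeft d a * b + a * (ι R v * contractLeft d b) := by
  rw [contractLeft_mul, mul_add, ← mul_assoc, ← mul_assoc, ι_mul_eq_involute_mul_ι v (involute a),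
    involute_involute, mul_assoc a]

theorem map_ι_of_commute_contractLeft (φ : ExteriorAlgebra R M →ₐ[R] ExteriorAlgebra R M)
    {v w : M} {d : Module.Dual R M} (hdw : d w = 1)
    (hd : ∀ a, φ (contractLeft d a) = contractLeft d (φ a))
    (hvd : ∀ a, φ (ι R v * contractLeft d a) = ι R v * contractLeft d (φ a)) :
    φ (ι R v) = ι R v := by
  have hw : contractLeft d (ι R w) = 1 := by rw [contractLeft_ι, hdw, map_one]
  calc φ (ι R v) = φ (ι R v * contractLeft d (ι R w)) := by rw [hw, mul_one]
    _ = ι R v * contractLeft d (φ (ι R w)) := hvd _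
    _ = ι R v := by rw [← hd, hw, map_one, mul_one]

end ExteriorAlgebra

section Grassmann

variable {R : Type*} [CommRing R] {n : ℕ}

open CliffordAlgebra

theorem evenSub_eq_evenOdd_zero : evenSub R n = evenOdd (0 : QuadraticForm R (Fin n → R)) 0 := by
  refine le_antisymm
    (iSup_le fun j => le_iSup_of_le ⟨2 * j, (even_two_mul j).natCast_zmod_two⟩ le_rfl)
    (iSup_le fun ⟨m, hm⟩ => ?_)
  obtain ⟨j, rfl⟩ := ZMod.natCast_eq_zero_iff_even.mp hm
  exact le_iSup_of_le j (by rw [two_mul]; exact le_rfl)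

theorem oddSub_eq_evenOdd_one : oddSub R n = evenOdd (0 : QuadraticForm R (Fin n → R)) 1 := by
  refine le_antisymm
    (iSup_le fun j => le_iSup_of_le ⟨2 * j + 1, (odd_two_mul_add_one j).natCast_zmod_two⟩ le_rfl)
    (iSup_le fun ⟨m, hm⟩ => ?_)
  obtain ⟨j, rfl⟩ := ZMod.natCast_eq_one_iff_odd.mp hm
  exact le_iSup_of_le j le_rfl

theorem isSuperDer_contractLeft (d : Module.Dual R (Fin n → R)) :
    IsSuperDer R n true (contractLeft d) := by
  simp only [IsSuperDer, if_true, evenSub_eq_evenOdd_zero, oddSub_eq_evenOdd_one]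
  refine ⟨⟨fun a ha => ?_, fun a ha => ?_⟩, fun a ha b => ?_, fun a ha b => ?_⟩
  · simpa using contractLeft_mem_evenOdd (i := 0) d ha
  · simpa [CharTwo.add_self_eq_zero] using contractLeft_mem_evenOdd (i := 1) d ha
  · rw [contractLeft_mul, involute_eq_of_mem_even ha]
  · rw [contractLeft_mul, involute_eq_of_mem_odd ha, neg_mul, neg_one_smul]

theorem isSuperDer_ι_mul_contractLeft (v : Fin n → R) (d : Module.Dual R (Fin n → R)) :
    IsSuperDer R n false (LinearMap.mulLeft R (ExteriorAlgebra.ι R v) ∘ₗ contractLeft d) := by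
  simp only [IsSuperDer, Bool.false_eq_true, if_false, one_smul, LinearMap.comp_apply,
    LinearMap.mulLeft_apply, ExteriorAlgebra.ι_mul_contractLeft_mul, implies_true, and_true,
    evenSub_eq_evenOdd_zero, oddSub_eq_evenOdd_one]
  exact ⟨fun a ha => ι_mul_contractLeft_mem_evenOdd v d ha,
    fun a ha => ι_mul_contractLeft_mem_evenOdd v d ha⟩

end Grassmann

theorem stmt_16_general
    (R : Type*) [CommRing R] (n : ℕ)
    (φ : ExteriorAlgebra R (Fin n → R) ≃ₐ[R] ExteriorAlgebra R (Fin n → R))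
    (hc : ∀ (p : Bool) (D : Module.End R (ExteriorAlgebra R (Fin n → R))),
      IsSuperDer R n p D → ∀ a, φ (D a) = D (φ a)) :
    φ = AlgEquiv.refl := by
  refine AlgEquiv.coe_toAlgHom_injective (ExteriorAlgebra.hom_ext (LinearMap.ext fun v => ?_))
  rcases isEmpty_or_nonempty (Fin n) with hn | ⟨⟨i⟩⟩
  · simp [Subsingleton.elim v 0]
  · have hdw : LinearMap.proj (R := R) (φ := fun _ : Fin n => R) i (Pi.single i 1) = 1 :=
      Pi.single_eq_same i 1
    exact ExteriorAlgebra.map_ι_of_commute_contractLeft (φ : _ →ₐ[R] _) hdw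
      (hc true _ (isSuperDer_contractLeft _)) (hc false _ (isSuperDer_ι_mul_contractLeft v _))

/-- Every parity-preserving `R`-algebra automorphism of `Λ(n) ⊗ R` commuting with
all superderivations (i.e. with `W(n)(R)`) is the identity: the kernel of
`Ad : Aut Λ(n) → Aut W(n)` is trivial. -/
theorem stmt_16 (k : Type*) [Field k] [CharZero k]
    (R : Type*) [CommRing R] [Algebra k R] (n : ℕ)
    (φ : ExteriorAlgebra R (Fin n → R) ≃ₐ[R] ExteriorAlgebra R (Fin n → R))
    (hφe : ∀ a ∈ evenSub R n, φ a ∈ evenSub R n)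
    (hφo : ∀ a ∈ oddSub R n, φ a ∈ oddSub R n)
    (hc : ∀ (p : Bool) (D : Module.End R (ExteriorAlgebra R (Fin n → R))),
      IsSuperDer R n p D → ∀ a, φ (D a) = D (φ a)) :
    φ = AlgEquiv.refl :=
  stmt_16_general R n φ hc
end

section
/- Let N be the group of algebra automorphisms ν of Λ(n) ⊗ R (R a commutative k-algebra, char k = 0) preserving parity and satisfying (ν - id)(Λ(n)_i(R)) ⊆ ⊕_{j>i} Λ(n)_j(R) for all i. Then the map ν ↦ (ν - id)|_{V(R)}, where V = Λ(n)₁, is a bijection from N onto Hom_R(V(R), U(R)) with U = ⊕_{i≥1} Λ^{2i+1}V. -/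
open ExteriorAlgebra

section

variable (R : Type*) [CommRing R] (n : ℕ)

/-- `U = ⊕_{i ≥ 1} Λ^{2i+1} V`, the odd part in degrees `≥ 3`. -/
noncomputable def grassU : Submodule R (ExteriorAlgebra R (Fin n → R)) :=
  ⨆ i : ℕ, grassV R n ^ (2 * i + 3)

end

section Aux

variable {R : Type*} [CommRing R] {n : ℕ}

lemma aux_mul_mem {a b : ℕ} {x y : ExteriorAlgebra R (Fin n → R)}
    (hx : x ∈ grassV R n ^ a) (hy : y ∈ grassV R n ^ b) :
    x * y ∈ grassV R n ^ (a + b) := by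
  rw [pow_add]; exact Submodule.mul_mem_mul hx hy

lemma aux_ιmul (x y : Fin n → R) : ι R x * ι R y = -(ι R y * ι R x) :=
  eq_neg_of_add_eq_zero_left (ι_add_mul_swap x y)

lemma aux_ι_comm {q : ℕ} {v : ExteriorAlgebra R (Fin n → R)}
    (hv : v ∈ grassV R n ^ q) (x : Fin n → R) :
    ι R x * v = ((-1 : R) ^ q) • (v * ι R x) := by
  induction hv using Submodule.pow_induction_on_left' with
  | algebraMap r => rw [pow_zero, one_smul, Algebra.commutes]
  | add u w i hu hw ihu ihw => rw [mul_add, add_mul, smul_add, ihu, ihw]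
  | mem_mul m hm i w hw ih =>
    obtain ⟨y, rfl⟩ := hm
    calc ι R x * (ι R y * w)
        = -(ι R y * (ι R x * w)) := by rw [← mul_assoc, aux_ιmul, neg_mul, mul_assoc]
      _ = -(ι R y * (((-1:R)^i) • (w * ι R x))) := by rw [ih]
      _ = ((-1:R)^(i+1)) • (ι R y * w * ι R x) := by
          rw [mul_smul_comm, pow_succ, mul_neg_one, neg_smul, mul_assoc]

lemma aux_pow_mul {p : ℕ} {u : ExteriorAlgebra R (Fin n → R)}
    (hu : u ∈ grassV R n ^ p) (v : ExteriorAlgebra R (Fin n → R))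
    (hv : ∀ x : Fin n → R, ι R x * v = -(v * ι R x)) :
    u * v = ((-1 : R) ^ p) • (v * u) := by
  induction hu using Submodule.pow_induction_on_left' with
  | algebraMap r => rw [pow_zero, one_smul, Algebra.commutes]
  | add u w i hu hw ihu ihw => rw [add_mul, mul_add, smul_add, ihu, ihw]
  | mem_mul m hm i w hw ih =>
    obtain ⟨y, rfl⟩ := hm
    calc ι R y * w * v
        = ι R y * (((-1:R)^i) • (v * w)) := by rw [mul_assoc, ih]
      _ = ((-1:R)^i) • ((ι R y * v) * w) := by rw [mul_smul_comm, mul_assoc]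
      _ = ((-1:R)^i) • ((-(v * ι R y)) * w) := by rw [hv y]
      _ = ((-1:R)^(i+1)) • (v * (ι R y * w)) := by
          rw [neg_mul, smul_neg, pow_succ, mul_neg_one, neg_smul, mul_assoc]

lemma aux_ι_anticomm_odd {v : ExteriorAlgebra R (Fin n → R)} (hv : v ∈ oddSub R n)
    (x : Fin n → R) : ι R x * v = -(v * ι R x) := by
  induction hv using Submodule.iSup_induction' with
  | mem j v hv =>
    rw [aux_ι_comm hv x, Odd.neg_one_pow ⟨j, by ring⟩, neg_one_smul]
  | zero => simp
  | add u w hu hw ihu ihw => rw [mul_add, add_mul, neg_add, ihu, ihw]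

lemma aux_odd_anticomm {u v : ExteriorAlgebra R (Fin n → R)} (hu : u ∈ oddSub R n)
    (hv : v ∈ oddSub R n) : u * v = -(v * u) := by
  induction hu using Submodule.iSup_induction' with
  | mem j u hu =>
    rw [aux_pow_mul hu v (aux_ι_anticomm_odd hv), Odd.neg_one_pow ⟨j, by ring⟩, neg_one_smul]
  | zero => simp
  | add a b ha hb iha ihb => rw [add_mul, mul_add, neg_add, iha, ihb]

lemma aux_odd_sq (h2 : IsUnit (2 : R)) {u : ExteriorAlgebra R (Fin n → R)}
    (hu : u ∈ oddSub R n) : u * u = 0 := by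
  have h := aux_odd_anticomm hu hu
  have h' : 2 * (u * u) = 0 := by
    rw [two_mul]
    rw [eq_neg_iff_add_eq_zero] at h
    exact h
  have h2' : IsUnit (2 : ExteriorAlgebra R (Fin n → R)) := by
    have := h2.map (algebraMap R (ExteriorAlgebra R (Fin n → R)))
    rwa [map_ofNat] at this
  exact (h2'.mul_right_eq_zero).mp h'

lemma grassV_le_odd : grassV R n ≤ oddSub R n := by
  intro x hx
  exact Submodule.mem_iSup_of_mem 0 (by rw [show 2*0+1 = 1 from rfl, pow_one]; exact hx)

lemma grassU_le_odd : grassU R n ≤ oddSub R n := by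
  refine iSup_le fun i => ?_
  intro x hx
  refine Submodule.mem_iSup_of_mem (i + 1) ?_
  rwa [show 2*(i+1)+1 = 2*i+3 by ring]

lemma aux_odd_mul_odd {x y : ExteriorAlgebra R (Fin n → R)} (hx : x ∈ oddSub R n)
    (hy : y ∈ oddSub R n) : x * y ∈ evenSub R n := by
  induction hx using Submodule.iSup_induction' with
  | mem a x hx =>
    induction hy using Submodule.iSup_induction' with
    | mem b y hy =>
      refine Submodule.mem_iSup_of_mem (a + b + 1) ?_
      have := aux_mul_mem hx hy
      rwa [show 2*a+1+(2*b+1) = 2*(a+b+1) by ring] at this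
    | zero => simp
    | add u w hu hw ihu ihw => rw [mul_add]; exact add_mem ihu ihw
  | zero => simp
  | add u w hu hw ihu ihw => rw [add_mul]; exact add_mem ihu ihw

lemma aux_odd_mul_even {x y : ExteriorAlgebra R (Fin n → R)} (hx : x ∈ oddSub R n)
    (hy : y ∈ evenSub R n) : x * y ∈ oddSub R n := by
  induction hx using Submodule.iSup_induction' with
  | mem a x hx =>
    induction hy using Submodule.iSup_induction' with
    | mem b y hy =>
      refine Submodule.mem_iSup_of_mem (a + b) ?_
      have := aux_mul_mem hx hy
      rwa [show 2*a+1+2*b = 2*(a+b)+1 by ring] at this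
    | zero => simp
    | add u w hu hw ihu ihw => rw [mul_add]; exact add_mem ihu ihw
  | zero => simp
  | add u w hu hw ihu ihw => rw [add_mul]; exact add_mem ihu ihw

/-- The filtration `F i = ⨆ j ≥ i, V ^ j`. -/
noncomputable def Fsub (R : Type*) [CommRing R] (n i : ℕ) :
    Submodule R (ExteriorAlgebra R (Fin n → R)) :=
  ⨆ j ≥ i, grassV R n ^ j

lemma mem_Fsub_of_pow {i j : ℕ} (hij : i ≤ j) {x : ExteriorAlgebra R (Fin n → R)}
    (hx : x ∈ grassV R n ^ j) : x ∈ Fsub R n i :=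
  Submodule.mem_iSup_of_mem j (Submodule.mem_iSup_of_mem hij hx)

lemma Fsub_le {i : ℕ} {N : Submodule R (ExteriorAlgebra R (Fin n → R))}
    (h : ∀ j, i ≤ j → grassV R n ^ j ≤ N) : Fsub R n i ≤ N :=
  iSup₂_le h

lemma Fsub_mono {i i' : ℕ} (h : i ≤ i') : Fsub R n i' ≤ Fsub R n i :=
  Fsub_le fun j hj => fun _x hx => mem_Fsub_of_pow (h.trans hj) hx

lemma Fsub_eq_shift (i : ℕ) : Fsub R n i = ⨆ d : ℕ, grassV R n ^ (i + d) := by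
  apply le_antisymm
  · refine Fsub_le fun j hj => ?_
    obtain ⟨d, rfl⟩ := Nat.exists_eq_add_of_le hj
    exact le_iSup (fun d => grassV R n ^ (i + d)) d
  · refine iSup_le fun d => ?_
    intro x hx
    exact mem_Fsub_of_pow (Nat.le_add_right i d) hx

lemma Fsub_mul {a b : ℕ} {x y : ExteriorAlgebra R (Fin n → R)}
    (hx : x ∈ Fsub R n a) (hy : y ∈ Fsub R n b) : x * y ∈ Fsub R n (a + b) := by
  rw [Fsub_eq_shift] at hx hy
  induction hx using Submodule.iSup_induction' with
  | mem c x hx =>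
    induction hy using Submodule.iSup_induction' with
    | mem d y hy => exact mem_Fsub_of_pow (by omega) (aux_mul_mem hx hy)
    | zero => rw [mul_zero]; exact zero_mem _
    | add u w hu hw ihu ihw => rw [mul_add]; exact add_mem ihu ihw
  | zero => rw [zero_mul]; exact zero_mem _
  | add u w hu hw ihu ihw => rw [add_mul]; exact add_mem ihu ihw

lemma grassV_le_F1 : grassV R n ≤ Fsub R n 1 := fun _x hx =>
  mem_Fsub_of_pow le_rfl (by rwa [pow_one])

lemma grassU_le_F3 : grassU R n ≤ Fsub R n 3 :=
  iSup_le fun i => fun _x hx => mem_Fsub_of_pow (by omega) hx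

lemma aux_mem_F0 (a : ExteriorAlgebra R (Fin n → R)) : a ∈ Fsub R n 0 := by
  have htop : (⨆ i : ℕ, grassV R n ^ i) = ⊤ :=
    CliffordAlgebra.iSup_ι_range_eq_top (Q := (0 : QuadraticForm R (Fin n → R)))
  have ha : a ∈ (⨆ i : ℕ, grassV R n ^ i) := htop ▸ Submodule.mem_top
  induction ha using Submodule.iSup_induction' with
  | mem i a ha => exact mem_Fsub_of_pow (Nat.zero_le i) ha
  | zero => exact zero_mem _
  | add u w hu hw ihu ihw => exact add_mem ihu ihw

/-- Powers above `n` vanish. -/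
lemma grassV_pow_eq_bot {j : ℕ} (hj : n < j) :
    (grassV R n ^ j : Submodule R (ExteriorAlgebra R (Fin n → R))) = ⊥ := by
  classical
  set e : Fin n → (Fin n → R) := fun i t => if i = t then (1 : R) else 0 with he
  set S : Set (ExteriorAlgebra R (Fin n → R)) := Set.range fun i : Fin n => ι R (e i) with hS
  have hle : grassV R n ≤ Submodule.span R S := by
    rintro _ ⟨v, rfl⟩
    have hv : ι (R := R) v = ∑ i : Fin n, v i • ι R (e i) := by
      conv_lhs => rw [pi_eq_sum_univ v]
      rw [map_sum]
      simp [he]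
    rw [hv]
    exact Submodule.sum_mem _ fun i _ =>
      Submodule.smul_mem _ _ (Submodule.subset_span ⟨i, rfl⟩)
  have hpow : ∀ m : ℕ, grassV R n ^ m ≤ Submodule.span R S ^ m := by
    intro m
    induction m with
    | zero => simp
    | succ m ih =>
      rw [pow_succ, pow_succ]
      exact mul_le_mul' ih hle
  refine le_bot_iff.mp ((hpow j).trans ?_)
  rw [Submodule.span_pow, Submodule.span_le]
  intro x hx
  rw [Set.mem_pow] at hx
  obtain ⟨fel, rfl⟩ := hx
  have hch : ∀ i : Fin j, ∃ t : Fin n,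
      ι R (e t) = (fel i : ExteriorAlgebra R (Fin n → R)) := fun i => (fel i).2
  choose g hg using hch
  have hprod : (List.ofFn fun i => ((fel i : ExteriorAlgebra R (Fin n → R)))).prod
      = ιMulti R j (fun i => e (g i)) := by
    rw [ιMulti_apply]
    exact congrArg List.prod (congrArg List.ofFn (funext fun i => (hg i).symm))
  obtain ⟨i1, i2, hne, heq⟩ := Fintype.exists_ne_map_eq_of_card_lt g (by simpa using hj)
  simp only [SetLike.mem_coe, Submodule.mem_bot]
  rw [hprod]
  exact AlternatingMap.map_eq_zero_of_eq _ _ (congrArg e heq) hne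

lemma aux_parity (ν : ExteriorAlgebra R (Fin n → R) →ₐ[R] ExteriorAlgebra R (Fin n → R))
    (hν : ∀ x : Fin n → R, ν (ι R x) ∈ oddSub R n) :
    ∀ (i : ℕ) (a : ExteriorAlgebra R (Fin n → R)), a ∈ grassV R n ^ i →
      (Even i → ν a ∈ evenSub R n) ∧ (Odd i → ν a ∈ oddSub R n) := by
  intro i a ha
  induction ha using Submodule.pow_induction_on_left' with
  | algebraMap r =>
    constructor
    · intro _
      rw [AlgHom.commutes]
      refine Submodule.mem_iSup_of_mem 0 ?_
      rw [show 2*0 = 0 from rfl, pow_zero]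
      exact Submodule.algebraMap_mem r
    · intro h0
      exact absurd h0 (by simp)
  | add x y i hx hy ihx ihy =>
    rw [map_add]
    exact ⟨fun he => add_mem (ihx.1 he) (ihy.1 he), fun ho => add_mem (ihx.2 ho) (ihy.2 ho)⟩
  | mem_mul m hm i x hx ih =>
    obtain ⟨y, rfl⟩ := hm
    rw [map_mul]
    constructor
    · intro he
      have hoi : Odd i := Nat.not_even_iff_odd.mp (Nat.even_add_one.mp he)
      exact aux_odd_mul_odd (hν y) (ih.2 hoi)
    · intro ho
      have hei : Even i := Nat.not_odd_iff_even.mp (Nat.odd_add_one.mp ho)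
      exact aux_odd_mul_even (hν y) (ih.1 hei)

lemma aux_filtration (ν : ExteriorAlgebra R (Fin n → R) →ₐ[R] ExteriorAlgebra R (Fin n → R))
    (hν : ∀ x : Fin n → R, ν (ι R x) - ι R x ∈ Fsub R n 3) :
    ∀ (i : ℕ) (a : ExteriorAlgebra R (Fin n → R)), a ∈ grassV R n ^ i →
      ν a - a ∈ Fsub R n (i + 1) := by
  intro i a ha
  induction ha using Submodule.pow_induction_on_left' with
  | algebraMap r => rw [AlgHom.commutes, sub_self]; exact zero_mem _
  | add x y i hx hy ihx ihy =>
    rw [map_add]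
    have h : ν x + ν y - (x + y) = (ν x - x) + (ν y - y) := by abel
    rw [h]; exact add_mem ihx ihy
  | mem_mul m hm i x hx ih =>
    obtain ⟨y, rfl⟩ := hm
    have key : ν (ι R y * x) - ι R y * x
        = ι R y * (ν x - x) + (ν (ι R y) - ι R y) * x + (ν (ι R y) - ι R y) * (ν x - x) := by
      rw [map_mul]; noncomm_ring
    rw [key]
    refine add_mem (add_mem ?_ ?_) ?_
    · exact Fsub_mono (by omega) (Fsub_mul (grassV_le_F1 ⟨y, rfl⟩) ih)
    · exact Fsub_mono (by omega) (Fsub_mul (hν y) (mem_Fsub_of_pow le_rfl hx))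
    · exact Fsub_mono (by omega) (Fsub_mul (hν y) ih)

end Aux

/-- The unipotent group `N = N_{W(n)}` of parity-preserving automorphisms `ν` of
`Λ(n) ⊗ R` with `(ν - id)(Λ(n)_i(R)) ⊆ ⊕_{j>i} Λ(n)_j(R)` is in bijection with
`Hom_R(V(R), U(R))` via `ν ↦ (ν - id)|_V`: for every `f : V(R) → U(R)` there is a
unique such `ν` with `ν v = v + f v` on `V(R)`. -/
theorem stmt_17 (k : Type*) [Field k] [CharZero k]
    (R : Type*) [CommRing R] [Algebra k R] (n : ℕ)
    (f : ↥(grassV R n) →ₗ[R] ExteriorAlgebra R (Fin n → R))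
    (hf : ∀ v, f v ∈ grassU R n) :
    ∃! ν : ExteriorAlgebra R (Fin n → R) ≃ₐ[R] ExteriorAlgebra R (Fin n → R),
      (∀ a ∈ evenSub R n, ν a ∈ evenSub R n) ∧
      (∀ a ∈ oddSub R n, ν a ∈ oddSub R n) ∧
      (∀ (i : ℕ), ∀ a ∈ (grassV R n ^ i : Submodule R (ExteriorAlgebra R (Fin n → R))),
        ν a - a ∈ (⨆ j ≥ i + 1, grassV R n ^ j :
          Submodule R (ExteriorAlgebra R (Fin n → R)))) ∧
      (∀ v : ↥(grassV R n), ν (v : ExteriorAlgebra R (Fin n → R)) = (v : ExteriorAlgebra R (Fin n → R)) + f v) := by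
  classical
  have h2 : IsUnit (2 : R) := by
    have h := (isUnit_iff_ne_zero.mpr (two_ne_zero (α := k))).map (algebraMap k R)
    rwa [map_ofNat] at h
  set gmap : (Fin n → R) →ₗ[R] ExteriorAlgebra R (Fin n → R) :=
    (ι R : (Fin n → R) →ₗ[R] ExteriorAlgebra R (Fin n → R)) +
      f ∘ₗ LinearMap.codRestrict (grassV R n)
        (ι R : (Fin n → R) →ₗ[R] ExteriorAlgebra R (Fin n → R))
        (fun x => LinearMap.mem_range_self _ x) with hgdef
  have hgapp : ∀ x : Fin n → R, gmap x = ι R x + f ⟨ι R x, ⟨x, rfl⟩⟩ := fun x => rfl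
  have hgodd : ∀ x, gmap x ∈ oddSub R n := fun x => by
    rw [hgapp]
    exact add_mem (grassV_le_odd ⟨x, rfl⟩) (grassU_le_odd (hf _))
  have hgsq : ∀ x, gmap x * gmap x = 0 := fun x => aux_odd_sq h2 (hgodd x)
  set νh : ExteriorAlgebra R (Fin n → R) →ₐ[R] ExteriorAlgebra R (Fin n → R) :=
    ExteriorAlgebra.lift R ⟨gmap, hgsq⟩ with hνh
  have hνι : ∀ x : Fin n → R, νh (ι R x) = ι R x + f ⟨ι R x, ⟨x, rfl⟩⟩ := fun x => by
    rw [hνh, ExteriorAlgebra.lift_ι_apply, hgapp]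
  have hν_odd : ∀ x, νh (ι R x) ∈ oddSub R n := fun x => by
    rw [hνι]
    exact add_mem (grassV_le_odd ⟨x, rfl⟩) (grassU_le_odd (hf _))
  have hν_F3 : ∀ x, νh (ι R x) - ι R x ∈ Fsub R n 3 := fun x => by
    rw [hνι, add_sub_cancel_left]
    exact grassU_le_F3 (hf _)
  have hfil := aux_filtration νh hν_F3
  -- the difference with the identity, as a linear endomorphism
  set δ : Module.End R (ExteriorAlgebra R (Fin n → R)) := νh.toLinearMap - LinearMap.id with hδ
  have hδapp : ∀ a, δ a = νh a - a := fun a => rfl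
  have hδF : ∀ (i : ℕ) (a : ExteriorAlgebra R (Fin n → R)),
      a ∈ Fsub R n i → νh a - a ∈ Fsub R n (i + 1) := by
    intro i a ha
    rw [Fsub_eq_shift] at ha
    induction ha using Submodule.iSup_induction' with
    | mem d a ha => exact Fsub_mono (by omega) (hfil (i + d) a ha)
    | zero => rw [map_zero, sub_zero]; exact zero_mem _
    | add u w hu hw ihu ihw =>
      rw [map_add]
      have h : νh u + νh w - (u + w) = (νh u - u) + (νh w - w) := by abel
      rw [h]; exact add_mem ihu ihw
  have hδpow : ∀ (m : ℕ) (a : ExteriorAlgebra R (Fin n → R)), (δ ^ m) a ∈ Fsub R n m := by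
    intro m
    induction m with
    | zero => intro a; simpa using aux_mem_F0 a
    | succ m ih =>
      intro a
      rw [pow_succ', Module.End.mul_apply, hδapp]
      exact hδF m ((δ ^ m) a) (ih a)
  have hnil : δ ^ (n + 1) = 0 := by
    apply LinearMap.ext
    intro a
    have h1 := hδpow (n + 1) a
    have hbot : Fsub R n (n + 1) = ⊥ :=
      le_bot_iff.mp (Fsub_le fun j hj => by rw [grassV_pow_eq_bot (by omega)])
    rw [hbot, Submodule.mem_bot] at h1
    simpa using h1
  have hunit : IsUnit νh.toLinearMap := by
    have h1 : νh.toLinearMap = 1 + δ := by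
      rw [hδ, Module.End.one_eq_id]
      abel
    rw [h1]
    exact IsNilpotent.isUnit_one_add ⟨n + 1, hnil⟩
  have hbij : Function.Bijective νh := (Module.End.isUnit_iff νh.toLinearMap).mp hunit
  refine ⟨AlgEquiv.ofBijective νh hbij, ⟨?_, ?_, ?_, ?_⟩, ?_⟩
  · intro a ha
    rw [AlgEquiv.ofBijective_apply]
    induction ha using Submodule.iSup_induction' with
    | mem j a ha => exact (aux_parity νh hν_odd _ a ha).1 ⟨j, by ring⟩
    | zero => rw [map_zero]; exact zero_mem _
    | add u w hu hw ihu ihw => rw [map_add]; exact add_mem ihu ihw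
  · intro a ha
    rw [AlgEquiv.ofBijective_apply]
    induction ha using Submodule.iSup_induction' with
    | mem j a ha => exact (aux_parity νh hν_odd _ a ha).2 ⟨j, by ring⟩
    | zero => rw [map_zero]; exact zero_mem _
    | add u w hu hw ihu ihw => rw [map_add]; exact add_mem ihu ihw
  · intro i a ha
    rw [AlgEquiv.ofBijective_apply]
    exact hfil i a ha
  · intro v
    obtain ⟨x, hx⟩ := v.2
    rw [AlgEquiv.ofBijective_apply, ← hx, hνι x]
    congr 1
    exact congrArg f (Subtype.ext hx)
  · rintro ν' ⟨-, -, -, h4⟩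
    have key : ∀ x : Fin n → R, ν' (ι R x) = νh (ι R x) := fun x => by
      rw [hνι x]
      exact h4 ⟨ι R x, ⟨x, rfl⟩⟩
    have hhom : (ν' : ExteriorAlgebra R (Fin n → R) →ₐ[R] ExteriorAlgebra R (Fin n → R)) = νh :=
      ExteriorAlgebra.hom_ext (LinearMap.ext fun x => by simpa using key x)
    exact AlgEquiv.ext fun a => by
      rw [AlgEquiv.ofBijective_apply]
      exact DFunLike.congr_fun hhom a
end
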